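/- Let S be a finite set of points in the Euclidean plane and G the weighted unit-disk graph on S. Let ⟨z₀, …, z_t⟩ with t ≥ 2 be an edge-minimal shortest path from s = z₀ to a = z_t in G. Then d_G(s, z_t) > d_G(s, z_{t−2}) + 1. -/

import Mathlib

/-!
Write the path as `q` from `s` to `y = z_{t-2}` followed by the two-edge tail `y → z_{t-1} → a`.
By the triangle inequality the tail is at least `‖y - a‖` long, so `d_G(s,a) ≥ d_G(s,y) + ‖y - a‖`.
If `‖y - a‖ ≤ 1`, then `y` and `a` are adjacent (or equal), and replacing the tail by the hop
`y → a` gives a path from `s` to `a` that is still shortest but has fewer edges, contradicting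
edge-minimality. Hence `‖y - a‖ > 1`.
-/

noncomputable section

abbrev Pt := EuclideanSpace ℝ (Fin 2)

/-- The weighted unit-disk graph on a finite point set `S`: vertices are the points of
`S`, two distinct points are adjacent iff their Euclidean distance is at most 1. -/
def UDG (S : Finset Pt) : SimpleGraph {x : Pt // x ∈ S} where
  Adj a b := a ≠ b ∧ dist (a : Pt) (b : Pt) ≤ 1
  symm := by
    constructor
    intro a b hab
    exact ⟨hab.1.symm, by rw [dist_comm]; exact hab.2⟩
  loopless := by
    constructor
    intro a ha
    exact ha.1 rfl

/-- The (weighted) length of a walk: the sum of the Euclidean lengths of its edges. -/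
def wlen {S : Finset Pt} {u v : {x : Pt // x ∈ S}} (p : (UDG S).Walk u v) : ℝ :=
  (p.darts.map (fun d => dist (d.toProd.1 : Pt) (d.toProd.2 : Pt))).sum

/-- The shortest-path distance in the weighted unit-disk graph. -/
def dG (S : Finset Pt) (u v : {x : Pt // x ∈ S}) : ℝ :=
  sInf {L : ℝ | ∃ p : (UDG S).Walk u v, wlen p = L}

section

open SimpleGraph (Walk)

variable {S : Finset Pt}

lemma wlen_nil (u : {x : Pt // x ∈ S}) : wlen (Walk.nil : (UDG S).Walk u u) = 0 := rfl

lemma wlen_cons {u v w : {x : Pt // x ∈ S}} (h : (UDG S).Adj u v) (p : (UDG S).Walk v w) :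
    wlen (Walk.cons h p) = dist (u : Pt) v + wlen p := by
  simp [wlen]

lemma wlen_append {u v w : {x : Pt // x ∈ S}} (p : (UDG S).Walk u v) (q : (UDG S).Walk v w) :
    wlen (p.append q) = wlen p + wlen q := by
  simp [wlen, Walk.darts_append]

lemma wlen_nonneg {u v : {x : Pt // x ∈ S}} (p : (UDG S).Walk u v) : 0 ≤ wlen p :=
  List.sum_nonneg <| by
    simp only [List.mem_map]
    rintro _ ⟨d, -, rfl⟩
    exact dist_nonneg

lemma dist_le_wlen {u v : {x : Pt // x ∈ S}} (p : (UDG S).Walk u v) :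
    dist (u : Pt) v ≤ wlen p := by
  induction p with
  | nil => rw [dist_self, wlen_nil]
  | @cons u w v h p ih =>
    rw [wlen_cons]
    exact (dist_triangle (u : Pt) w v).trans (by linarith)

lemma dG_le_wlen {u v : {x : Pt // x ∈ S}} (p : (UDG S).Walk u v) : dG S u v ≤ wlen p :=
  csInf_le ⟨0, by rintro _ ⟨q, rfl⟩; exact wlen_nonneg q⟩ ⟨p, rfl⟩

lemma exists_walk_length_le_one_of_dist_le_one {u v : {x : Pt // x ∈ S}}
    (h : dist (u : Pt) v ≤ 1) :
    ∃ e : (UDG S).Walk u v, e.length ≤ 1 ∧ wlen e = dist (u : Pt) v := by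
  by_cases huv : u = v
  · subst huv
    exact ⟨Walk.nil, zero_le_one, by rw [wlen_nil, dist_self]⟩
  · have hadj : (UDG S).Adj u v := ⟨huv, h⟩
    exact ⟨Walk.cons hadj Walk.nil, le_rfl, by rw [wlen_cons, wlen_nil, add_zero]⟩

end

/-- Key observation in Lemma 3 (lem-correct): along an edge-minimal shortest path with
at least two edges from `s` to `a`, the vertex `r' = z_{t-2}` two steps before `a`
satisfies `d_G(s,a) > d_G(s,r') + 1`. -/
theorem stmt_9 (S : Finset Pt) (s a : {x : Pt // x ∈ S})
    (p : (UDG S).Walk s a) (hsp : wlen p = dG S s a)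
    (hmin : ∀ q : (UDG S).Walk s a, wlen q = dG S s a → p.length ≤ q.length)
    (ht : 2 ≤ p.length) :
    dG S s (p.getVert (p.length - 2)) + 1 < dG S s a := by
  set y := p.getVert (p.length - 2)
  set q := p.take (p.length - 2)
  set tail := p.drop (p.length - 2)
  have hsplit : q.append tail = p := p.append_take_drop_eq _
  have hlength : p.length = q.length + 2 := by
    have h := q.length_append tail
    rw [hsplit, SimpleGraph.Walk.drop_length] at h
    omega
  have hwlen : wlen p = wlen q + wlen tail := by
    have h := wlen_append q tail
    rwa [hsplit] at h
  have hdist : dG S s y + dist (y : Pt) a ≤ dG S s a := by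
    linarith [dG_le_wlen q, dist_le_wlen tail]
  by_contra! hle
  obtain ⟨e, he_length, he_wlen⟩ :=
    exists_walk_length_le_one_of_dist_le_one (u := y) (v := a) (by linarith)
  have hshort : wlen (q.append e) = dG S s a :=
    le_antisymm (by linarith [wlen_append q e, dist_le_wlen tail]) (dG_le_wlen _)
  have hfewer := hmin _ hshort
  rw [SimpleGraph.Walk.length_append] at hfewer
  omega
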